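/- Let A be a simple unital C*-algebra, let G be a finite group, let α : G → Aut(A) be an action of G on A, and let ω be a free ultrafilter on ℕ. Then α has the tracial Rokhlin property if and only if: for every finite subset F ⊂ A, every ε > 0, and every nonzero positive x ∈ A, there exist elements f_g ∈ ℓ∞(A) (g ∈ G) with each f_g(k) a projection and f_g(k) f_h(k) = 0 for all k whenever g ≠ h, such that, with f(k) = Σ_{g∈G} f_g(k): (a) lim_ω ‖f_g(k) a − a f_g(k)‖ < ε for all g ∈ G and all a ∈ F; (b) lim_ω ‖α_g(f_h(k)) − f_{gh}(k)‖ < ε for all g, h ∈ G; (c) for every δ > 0 there exists a bounded sequence (v_k) in A with lim_ω ‖(1 − f(k) − ε)₊ − v_k x v_k*‖ < δ; (d) lim_ω ‖f(k)‖ > 1 − ε. -/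

import Mathlib

open Filter Topology

/-- Cuntz subequivalence: `a ≾ b` iff there is a sequence `vₙ` with `‖a - vₙ b vₙ*‖ → 0`. -/
def CuntzSubeq {A : Type*} [NonUnitalRing A] [StarRing A] [Norm A] (a b : A) : Prop :=
  ∃ v : ℕ → A, Filter.Tendsto (fun n => ‖a - v n * b * star (v n)‖) Filter.atTop (nhds (0 : ℝ))

/-- A projection in a C*-algebra: a self-adjoint idempotent. -/
def IsProjection {A : Type*} [Mul A] [Star A] (p : A) : Prop :=
  star p = p ∧ p * p = p

/-- `(a - ε)₊`, via the continuous functional calculus applied to `t ↦ max (t - ε) 0`. -/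
noncomputable def cutDown {A : Type*} [CStarAlgebra A] (a : A) (ε : ℝ) : A :=
  cfc (fun t : ℝ => max (t - ε) 0) a

/-- The tracial Rokhlin property for an action `α` of a finite group `G` on a
unital C*-algebra `A` (where each `α g` is moreover assumed to be a *-automorphism). -/
def HasTracialRokhlin {A G : Type*} [CStarAlgebra A] [PartialOrder A] [StarOrderedRing A]
    [Group G] [Fintype G] (α : G →* (A ≃ₐ[ℂ] A)) : Prop :=
  ∀ (F : Finset A) (ε : ℝ), 0 < ε → ∀ x : A, 0 ≤ x → ‖x‖ = 1 →
    ∃ f : G → A,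
      (∀ g, IsProjection (f g)) ∧
      (∀ g h, g ≠ h → f g * f h = 0) ∧
      (∀ g, ∀ a ∈ F, ‖f g * a - a * f g‖ < ε) ∧
      (∀ g h, ‖α g (f h) - f (g * h)‖ < ε) ∧
      CuntzSubeq ((1 : A) - ∑ g, f g) x ∧
      1 - ε < ‖(∑ g, f g) * x * (∑ g, f g)‖

/-!
Forward direction: a tracial Rokhlin tower for `x / ‖x‖`, repeated as a constant sequence, already
satisfies the sequence conditions, because on a projection `q` the cut-down `(q - ε)₊` is
`(1 - ε)₊ q`.

Backward direction: fix one index at which all the sequence estimates hold for a smaller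
tolerance. The defect `1 - f` is then a projection at distance less than `1 - ε` from
`(1 - ε) v x v*`, and compressing to the corner of `1 - f` turns this into an equality
`1 - f = w x w*`. For `‖f x f‖ > 1 - ε`, let `e = (x - (1 - η/2))₊`. Since `e x e ≥ (1 - η/2) e e`
and `f` nearly commutes with `e`, the bound `‖f x f‖ ≤ 1 - η` would force `‖f e e f‖` to be small.
By simplicity `1` is approximated by finite sums `∑ c e e d`; as `f` nearly commutes with the `c`
and `d` as well, `‖f‖` would be at most about `1/4`, contradicting `‖f‖ > 1 - ε`.
-/

section CStarAlgebra

variable {A : Type*} [CStarAlgebra A]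

lemma isProjection_iff_isStarProjection {p : A} : IsProjection p ↔ IsStarProjection p := by
  rw [isStarProjection_iff']
  exact and_comm

lemma IsStarProjection.sum_of_mul_eq_zero {ι : Type*} [Fintype ι] {f : ι → A}
    (hf : ∀ i, IsStarProjection (f i)) (horth : ∀ i j, i ≠ j → f i * f j = 0) :
    IsStarProjection (∑ i, f i) := by
  refine isStarProjection_iff'.mpr ⟨?_, ?_⟩
  · rw [Finset.sum_mul_sum]
    refine Finset.sum_congr rfl fun i _ => ?_
    rw [Finset.sum_eq_single i (fun j _ hji => horth i j hji.symm) (by simp)]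
    exact (hf i).isIdempotentElem.eq
  · rw [star_sum]
    exact Finset.sum_congr rfl fun i _ => (hf i).isSelfAdjoint.star_eq

lemma IsStarProjection.cutDown_eq {p : A} (hp : IsStarProjection p) {ε : ℝ} (hε : 0 ≤ ε) :
    cutDown p ε = max (1 - ε) 0 • p := by
  rw [← cfc_const_mul_id (max (1 - ε) 0) p hp.isSelfAdjoint, cutDown]
  refine cfc_congr fun t ht => ?_
  rcases hp.isIdempotentElem.spectrum_subset ℝ ht with rfl | rfl <;> simp [hε]

lemma norm_cutDown_le (a : A) {ε : ℝ} (hε : 0 ≤ ε) :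
    ‖cutDown a ε‖ ≤ ‖a‖ := by
  nontriviality A
  exact norm_cfc_le (norm_nonneg a) fun t ht => by
    have := spectrum.norm_le_norm_of_mem ht
    rw [Real.norm_eq_abs] at this ⊢
    rw [abs_of_nonneg (le_max_right _ _)]
    exact max_le (by linarith [le_abs_self t]) (abs_nonneg t |>.trans this)

lemma isUnit_of_norm_algebraMap_sub_lt {z : A} {c : ℝ} (h : ‖algebraMap ℝ A c - z‖ < c) :
    IsUnit z := by
  have hc : 0 < c := (norm_nonneg _).trans_lt h
  have hz : z = c • (1 - c⁻¹ • (algebraMap ℝ A c - z)) := by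
    rw [smul_sub, smul_smul, mul_inv_cancel₀ hc.ne', one_smul, Algebra.algebraMap_eq_smul_one]
    simp
  rw [hz]
  refine (isUnit_one_sub_of_norm_lt_one ?_).smul (Units.mk0 c hc.ne')
  rw [norm_smul, Real.norm_of_nonneg (inv_nonneg.mpr hc.le), inv_mul_lt_iff₀ hc, mul_one]
  exact h

lemma sqrt_smul_mul_mul_star {r : ℝ} (hr : 0 ≤ r) (v b : A) :
    (√r • v) * b * star (√r • v) = r • (v * b * star v) := by
  rw [star_smul, star_trivial, smul_mul_assoc, smul_mul_assoc, mul_smul_comm, smul_smul,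
    Real.mul_self_sqrt hr]

lemma CuntzSubeq.smul_left {a b : A} (h : CuntzSubeq a b) {r : ℝ} (hr : 0 ≤ r) :
    CuntzSubeq (r • a) b := by
  obtain ⟨v, hv⟩ := h
  refine ⟨fun n => √r • v n, ?_⟩
  simp only [sqrt_smul_mul_mul_star hr, ← smul_sub, norm_smul, Real.norm_of_nonneg hr]
  simpa using hv.const_mul r

lemma CuntzSubeq.of_smul_right {a b : A} {t : ℝ} (ht : 0 ≤ t) (h : CuntzSubeq a (t • b)) :
    CuntzSubeq a b := by
  obtain ⟨v, hv⟩ := h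
  refine ⟨fun n => √t • v n, ?_⟩
  simp only [sqrt_smul_mul_mul_star ht]
  simpa only [mul_smul_comm, smul_mul_assoc] using hv

lemma CuntzSubeq.exists_norm_sub_lt {a b : A} (h : CuntzSubeq a b) {δ : ℝ} (hδ : 0 < δ) :
    ∃ v : A, ‖a - v * b * star v‖ < δ := by
  obtain ⟨v, hv⟩ := h
  obtain ⟨n, hn⟩ := (hv.eventually_lt_const hδ).exists
  exact ⟨v n, hn⟩

lemma norm_mul_sandwich_mul_le {u y c d : A} (hu : ‖u‖ ≤ 1) (hy : ‖y‖ ≤ 1) :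
    ‖u * (c * y * d) * u‖ ≤
      ‖u * c - c * u‖ * ‖d‖ + ‖c‖ * ‖u * d - d * u‖ + ‖c‖ * ‖u * y * u‖ * ‖d‖ := by
  have hdu : ‖d * u‖ ≤ ‖d‖ := (norm_mul_le _ _).trans (mul_le_of_le_one_right (norm_nonneg _) hu)
  have huy : ‖u * y‖ ≤ 1 := (norm_mul_le _ _).trans (mul_le_one₀ hu (norm_nonneg _) hy)
  calc ‖u * (c * y * d) * u‖
      = ‖(u * c - c * u) * y * (d * u) + c * (u * y) * (d * u - u * d) + c * (u * y * u) * d‖ := by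
        congr 1; noncomm_ring
    _ ≤ ‖u * c - c * u‖ * ‖y‖ * ‖d * u‖ + ‖c‖ * ‖u * y‖ * ‖d * u - u * d‖ +
        ‖c‖ * ‖u * y * u‖ * ‖d‖ :=
      (norm_add₃_le).trans (by gcongr <;> exact norm_mul₃_le)
    _ ≤ ‖u * c - c * u‖ * 1 * ‖d‖ + ‖c‖ * 1 * ‖u * d - d * u‖ + ‖c‖ * ‖u * y * u‖ * ‖d‖ := by
        rw [norm_sub_rev (d * u)]
        gcongr
    _ = _ := by ring

lemma norm_mul_multiset_sum_mul_le {u y : A} (hu : ‖u‖ ≤ 1) (hy : ‖y‖ ≤ 1)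
    (m : Multiset (A × A)) {κ : ℝ}
    (hκ : ∀ q ∈ m, ‖u * q.1 - q.1 * u‖ ≤ κ ∧ ‖u * q.2 - q.2 * u‖ ≤ κ) :
    ‖u * (m.map fun q => q.1 * y * q.2).sum * u‖ ≤
      κ * (m.map fun q => ‖q.1‖ + ‖q.2‖).sum +
        ‖u * y * u‖ * (m.map fun q => ‖q.1‖ * ‖q.2‖).sum := by
  rw [← Multiset.sum_map_mul_left, ← Multiset.sum_map_mul_right, ← Multiset.sum_map_mul_left,
    ← Multiset.sum_map_mul_left, ← Multiset.sum_map_add]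
  refine (norm_multiset_sum_le _).trans ?_
  rw [Multiset.map_map]
  refine Multiset.sum_map_le_sum_map _ _ fun q hq => ?_
  obtain ⟨h₁, h₂⟩ := hκ q hq
  refine (norm_mul_sandwich_mul_le hu hy).trans ?_
  nlinarith [norm_nonneg q.1, norm_nonneg q.2, norm_nonneg (u * q.1 - q.1 * u),
    norm_nonneg (u * q.2 - q.2 * u), mul_le_mul_of_nonneg_right h₁ (norm_nonneg q.2),
    mul_le_mul_of_nonneg_left h₂ (norm_nonneg q.1)]

lemma IsStarProjection.norm_le_norm_one_sub_add {p : A} (hp : IsStarProjection p) (s : A) :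
    ‖p‖ ≤ ‖1 - s‖ + ‖p * s * p‖ := by
  have hp1 : ‖p‖ ≤ 1 := hp.norm_le
  calc ‖p‖ = ‖p * (1 - s) * p + p * s * p‖ := by
        rw [← add_mul, ← mul_add, sub_add_cancel, mul_one, hp.isIdempotentElem.eq]
    _ ≤ ‖p‖ * ‖1 - s‖ * ‖p‖ + ‖p * s * p‖ := (norm_add_le _ _).trans (by gcongr; exact norm_mul₃_le)
    _ ≤ 1 * ‖1 - s‖ * 1 + ‖p * s * p‖ := by gcongr
    _ = ‖1 - s‖ + ‖p * s * p‖ := by ring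

lemma norm_compress_sub_compress_le {p e x : A} (hp : ‖p‖ ≤ 1) (he : ‖e‖ ≤ 1) (hx : ‖x‖ ≤ 1) :
    ‖p * (e * x * e) * p - e * (p * x * p) * e‖ ≤ 2 * ‖p * e - e * p‖ := by
  have hep : ‖e * p‖ ≤ 1 := (norm_mul_le _ _).trans (mul_le_one₀ he (norm_nonneg _) hp)
  calc ‖p * (e * x * e) * p - e * (p * x * p) * e‖
      = ‖(p * e - e * p) * x * (e * p) + (e * p) * x * (e * p - p * e)‖ := by
        congr 1; noncomm_ring
    _ ≤ ‖p * e - e * p‖ * ‖x‖ * ‖e * p‖ + ‖e * p‖ * ‖x‖ * ‖e * p - p * e‖ :=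
      (norm_add_le _ _).trans (by gcongr <;> exact norm_mul₃_le)
    _ ≤ ‖p * e - e * p‖ * 1 * 1 + 1 * 1 * ‖p * e - e * p‖ := by
        rw [norm_sub_rev (e * p)]
        gcongr
    _ = 2 * ‖p * e - e * p‖ := by ring

lemma IsStarProjection.norm_conj_compress_le {p e : A} (hp : IsStarProjection p)
    (he : IsSelfAdjoint e) (x : A) :
    ‖e * (p * x * p) * e‖ ≤ ‖p * x * p‖ * ‖p * (e * e) * p‖ := by
  have hpp : p * p = p := hp.isIdempotentElem.eq
  have hstar : star (p * e) = e * p := by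
    rw [star_mul, he.star_eq, hp.isSelfAdjoint.star_eq]
  have hsq : ‖p * (e * e) * p‖ = ‖p * e‖ * ‖p * e‖ := by
    rw [← CStarRing.norm_self_mul_star, hstar]
    noncomm_ring
  have hfactor : e * (p * x * p) * e = e * p * (p * x * p) * (p * e) := by
    calc e * (p * x * p) * e = e * (p * p) * x * (p * p) * e := by rw [hpp]; noncomm_ring
      _ = _ := by noncomm_ring
  calc ‖e * (p * x * p) * e‖ = ‖e * p * (p * x * p) * (p * e)‖ := by rw [hfactor]
    _ ≤ ‖e * p‖ * ‖p * x * p‖ * ‖p * e‖ := norm_mul₃_le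
    _ = ‖p * x * p‖ * ‖p * (e * e) * p‖ := by
        rw [hsq, ← hstar, norm_star]
        ring

end CStarAlgebra

section StarOrdered

variable {A : Type*} [CStarAlgebra A] [PartialOrder A] [StarOrderedRing A]

lemma cutDown_nonneg (a : A) (ε : ℝ) : 0 ≤ cutDown a ε :=
  cfc_nonneg fun _ _ => le_max_right _ _

lemma cutDown_ne_zero {a : A} (ha : 0 ≤ a) {ε : ℝ} (hε : 0 ≤ ε) (hεa : ε < ‖a‖) :
    cutDown a ε ≠ 0 := by
  have : Nontrivial A := ⟨⟨a, 0, norm_pos_iff.mp (hε.trans_lt hεa)⟩⟩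
  intro h
  have hEq := eqOn_of_cfc_eq_cfc (f := fun t : ℝ => max (t - ε) 0) (g := 0) (a := a)
    (by rw [cfc_zero]; exact h)
  have := hEq (CStarAlgebra.norm_mem_spectrum_of_nonneg ha)
  simp only [Pi.zero_apply, max_eq_right_iff, tsub_le_iff_right, zero_add] at this
  linarith

lemma smul_mul_self_cutDown_le {a : A} (ha : IsSelfAdjoint a) (ε : ℝ) :
    ε • (cutDown a ε * cutDown a ε) ≤ cutDown a ε * a * cutDown a ε := by
  have hconj : cutDown a ε * a * cutDown a ε =
      cfc (fun t : ℝ => max (t - ε) 0 * t * max (t - ε) 0) a := by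
    rw [cfc_mul _ _ a, cfc_mul (fun t : ℝ => max (t - ε) 0) _ a, cfc_id' ℝ a, cutDown]
  rw [hconj, cutDown, ← cfc_mul _ _ a, ← cfc_smul .., cfc_le_iff _ _ a]
  intro t _
  rcases le_total t ε with h | h
  · simp [max_eq_right (sub_nonpos.mpr h)]
  · simp only [max_eq_left (sub_nonneg.mpr h), smul_eq_mul]
    nlinarith [mul_nonneg (sub_nonneg.mpr h) (sub_nonneg.mpr h)]

lemma exists_isSelfAdjoint_mul_mul_eq_of_commute {p z : A} (hz : 0 ≤ z) (hzu : IsUnit z)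
    (hpz : Commute p z) : ∃ r : A, IsSelfAdjoint r ∧ r * (z * p) * r = p := by
  set s := CFC.sqrt z
  have hsu : IsUnit s := (CFC.isUnit_sqrt_iff z hz).mpr hzu
  have hsp : Commute s p := by
    rw [show s = cfc NNReal.sqrt z from CFC.sqrt_eq_cfc]
    exact hpz.symm.cfc_nnreal _
  refine ⟨Ring.inverse s, (CFC.sqrt_nonneg z).isSelfAdjoint.ringInverse, ?_⟩
  have hss : s * s = z := CFC.sqrt_mul_sqrt_self z hz
  have hzp : s * p * s = z * p := by rw [hsp.eq, mul_assoc, hss, hpz.eq]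
  calc Ring.inverse s * (z * p) * Ring.inverse s
      = Ring.inverse s * (s * p * s) * Ring.inverse s := by rw [hzp]
    _ = p := by
        rw [← mul_assoc, ← mul_assoc, Ring.inverse_mul_cancel s hsu, one_mul, mul_assoc,
          Ring.mul_inverse_cancel s hsu, mul_one]

lemma IsStarProjection.exists_eq_conj_of_norm_smul_sub_lt {p x v : A} (hp : IsStarProjection p)
    (hx : 0 ≤ x) {c : ℝ} (h : ‖c • p - v * x * star v‖ < c) :
    ∃ w : A, p = w * x * star w := by
  have hc : 0 < c := (norm_nonneg _).trans_lt h
  have hpp : p * p = p := hp.isIdempotentElem.eq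
  have hps : star p = p := hp.isSelfAdjoint.star_eq
  set b := v * x * star v
  -- `z` is `p b p` on the corner of `p` and `c` off it; it is invertible and commutes with `p`.
  set z := p * b * p + c • (1 - p)
  have hb : 0 ≤ p * b * p := by
    simpa [hps] using star_left_conjugate_nonneg (star_right_conjugate_nonneg hx v) p
  have hzp : z * p = p * b * p := by
    simp only [z, add_mul, smul_mul_assoc, sub_mul, one_mul, hpp, sub_self, smul_zero, add_zero,
      mul_assoc]
  have hpz : Commute p z := by
    rw [Commute, SemiconjBy, hzp]
    simp only [z, mul_add, mul_smul_comm, mul_sub, mul_one, hpp, sub_self, smul_zero, add_zero,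
      ← mul_assoc]
  have hzu : IsUnit z := by
    refine isUnit_of_norm_algebraMap_sub_lt (c := c) ?_
    have : algebraMap ℝ A c - z = p * (c • p - b) * p := by
      simp only [z, Algebra.algebraMap_eq_smul_one, mul_sub, sub_mul, smul_sub, mul_smul_comm,
        smul_mul_assoc, hpp]
      abel
    rw [this]
    calc ‖p * (c • p - b) * p‖ ≤ ‖p‖ * ‖c • p - b‖ * ‖p‖ := norm_mul₃_le
      _ ≤ 1 * ‖c • p - b‖ * 1 := by gcongr <;> exact hp.norm_le
      _ < c := by simpa using h
  obtain ⟨r, hr, hrp⟩ := exists_isSelfAdjoint_mul_mul_eq_of_commute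
    (add_nonneg hb (smul_nonneg hc.le hp.one_sub_nonneg)) hzu hpz
  refine ⟨r * p * v, ?_⟩
  calc p = r * (z * p) * r := hrp.symm
    _ = r * p * v * x * star (r * p * v) := by
      rw [hzp]
      simp only [b, star_mul, hps, hr.star_eq, mul_assoc]

lemma IsStarProjection.mul_norm_compress_le_of_smul_le {p e x : A} (hp : IsStarProjection p)
    (he : IsSelfAdjoint e) {r : ℝ} (hr : 0 ≤ r) (h : r • (e * e) ≤ e * x * e) :
    r * ‖p * (e * e) * p‖ ≤ ‖p * (e * x * e) * p‖ := by
  have hps : star p = p := hp.isSelfAdjoint.star_eq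
  have hle : r • (p * (e * e) * p) ≤ p * (e * x * e) * p := by
    simpa [hps, mul_smul_comm, smul_mul_assoc] using star_left_conjugate_le_conjugate h p
  have hnonneg : 0 ≤ r • (p * (e * e) * p) := by
    refine smul_nonneg hr ?_
    simpa [hps, he.star_eq, mul_assoc] using star_mul_self_nonneg (e * p)
  simpa [norm_smul, abs_of_nonneg hr] using CStarAlgebra.norm_le_norm_of_nonneg_of_le hnonneg hle

lemma IsStarProjection.one_sub_lt_norm_compress {p x e : A} (hp : IsStarProjection p)
    (hx : ‖x‖ ≤ 1) (he : IsSelfAdjoint e) (he1 : ‖e‖ ≤ 1) {η κ : ℝ} (hη : 0 < η)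
    (hexe : (1 - η / 2) • (e * e) ≤ e * x * e) {m : Multiset (A × A)}
    (hm : ‖1 - (m.map fun q => q.1 * (e * e) * q.2).sum‖ ≤ 1 / 4)
    (hpe : ‖p * e - e * p‖ ≤ κ)
    (hpm : ∀ q ∈ m, ‖p * q.1 - q.1 * p‖ ≤ κ ∧ ‖p * q.2 - q.2 * p‖ ≤ κ)
    (hκ : κ * ((m.map fun q => ‖q.1‖ + ‖q.2‖).sum +
      4 / η * (m.map fun q => ‖q.1‖ * ‖q.2‖).sum) < 1 / 2)
    (hp34 : 3 / 4 ≤ ‖p‖) :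
    1 - η < ‖p * x * p‖ := by
  by_contra! hpx
  set γ := ‖p * (e * e) * p‖
  have hη1 : η ≤ 1 := by linarith [norm_nonneg (p * x * p)]
  have hγ : γ ≤ 4 / η * κ := by
    have hlow := hp.mul_norm_compress_le_of_smul_le he (by linarith) hexe
    have hswap := norm_compress_sub_compress_le hp.norm_le he1 hx
    have hconj := hp.norm_conj_compress_le he x
    have hupper : ‖p * (e * x * e) * p‖ ≤ 2 * κ + (1 - η) * γ := by
      calc ‖p * (e * x * e) * p‖ ≤ ‖p * (e * x * e) * p - e * (p * x * p) * e‖ +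
            ‖e * (p * x * p) * e‖ := norm_le_norm_sub_add _ _
        _ ≤ 2 * κ + (1 - η) * γ := by
          gcongr
          · linarith
          · exact hconj.trans (by gcongr)
    rw [div_mul_eq_mul_div, le_div_iff₀ hη]
    nlinarith
  have hee : ‖e * e‖ ≤ 1 := (norm_mul_le _ _).trans (mul_le_one₀ he1 (norm_nonneg _) he1)
  have hsum := norm_mul_multiset_sum_mul_le hp.norm_le hee m hpm
  have hM : 0 ≤ (m.map fun q => ‖q.1‖ * ‖q.2‖).sum :=
    Multiset.sum_nonneg fun _ hq => by
      obtain ⟨q, -, rfl⟩ := Multiset.mem_map.mp hq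
      positivity
  have := hp.norm_le_norm_one_sub_add (m.map fun q => q.1 * (e * e) * q.2).sum
  nlinarith [mul_le_mul_of_nonneg_right hγ hM]

end StarOrdered

namespace TwoSidedIdeal

variable {R : Type*} [Ring R]

def topologicalClosure [TopologicalSpace R] [IsTopologicalRing R] (I : TwoSidedIdeal R) :
    TwoSidedIdeal R :=
  .mk' (closure I) (subset_closure I.zero_mem)
    (fun ha hb => map_mem_closure₂ continuous_add ha hb fun _ ha _ hb => I.add_mem ha hb)
    (fun ha => map_mem_closure continuous_neg ha fun _ ha => I.neg_mem ha)
    (fun {r _} ha => map_mem_closure (continuous_const_mul r) ha fun _ ha => I.mul_mem_left r _ ha)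
    (fun {_ r} ha => map_mem_closure (f := (· * r)) (continuous_mul_const r) ha
      fun _ ha => I.mul_mem_right _ r ha)

lemma coe_topologicalClosure [TopologicalSpace R] [IsTopologicalRing R] (I : TwoSidedIdeal R) :
    (I.topologicalClosure : Set R) = closure I := by
  rw [topologicalClosure, coe_mk']

lemma exists_multiset_of_mem_span_singleton {y s : R} (hs : s ∈ span {y}) :
    ∃ m : Multiset (R × R), (m.map fun q => q.1 * y * q.2).sum = s := by
  induction hs using span_induction with
  | mem _ h => exact ⟨{(1, 1)}, by simp_all⟩
  | zero => exact ⟨0, by simp⟩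
  | add _ _ _ _ h₁ h₂ =>
    obtain ⟨m₁, rfl⟩ := h₁
    obtain ⟨m₂, rfl⟩ := h₂
    exact ⟨m₁ + m₂, by simp⟩
  | neg _ _ h =>
    obtain ⟨m, rfl⟩ := h
    exact ⟨m.map fun q => (-q.1, q.2), by simp [Multiset.map_map]⟩
  | left_absorb r _ _ h =>
    obtain ⟨m, rfl⟩ := h
    exact ⟨m.map fun q => (r * q.1, q.2), by
      simp [Multiset.map_map, mul_assoc, ← Multiset.sum_map_mul_left]⟩
  | right_absorb r _ _ h =>
    obtain ⟨m, rfl⟩ := h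
    exact ⟨m.map fun q => (q.1, q.2 * r), by
      simp [Multiset.map_map, mul_assoc, ← Multiset.sum_map_mul_right]⟩

end TwoSidedIdeal

lemma exists_multiset_norm_one_sub_lt {A : Type*} [CStarAlgebra A]
    (hA : ∀ I : TwoSidedIdeal A, IsClosed (I : Set A) → I = ⊥ ∨ I = ⊤) {y : A} (hy : y ≠ 0)
    {δ : ℝ} (hδ : 0 < δ) :
    ∃ m : Multiset (A × A), ‖1 - (m.map fun q => q.1 * y * q.2).sum‖ < δ := by
  have hclosure := (TwoSidedIdeal.span {y}).coe_topologicalClosure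
  have hyI : y ∈ (TwoSidedIdeal.span {y}).topologicalClosure := by
    rw [← SetLike.mem_coe, hclosure]
    exact subset_closure (TwoSidedIdeal.subset_span rfl)
  have hI : (TwoSidedIdeal.span {y}).topologicalClosure = ⊤ :=
    (hA _ (hclosure ▸ isClosed_closure)).resolve_left
      fun h => hy (by rwa [h, TwoSidedIdeal.mem_bot] at hyI)
  have h1 : (1 : A) ∈ closure (TwoSidedIdeal.span {y} : Set A) := by
    rw [← hclosure, hI]
    exact TwoSidedIdeal.mem_top A
  obtain ⟨s, hs, hδs⟩ := Metric.mem_closure_iff.mp h1 δ hδ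
  obtain ⟨m, rfl⟩ := TwoSidedIdeal.exists_multiset_of_mem_span_singleton hs
  exact ⟨m, by rwa [dist_eq_norm] at hδs⟩

lemma exists_pos_lt_and_mul_lt {a b : ℝ} (ha : 0 < a) (hb : 0 < b) (C : ℝ) :
    ∃ t : ℝ, 0 < t ∧ t < a ∧ t * C < b := by
  have hC : Tendsto (fun t : ℝ => t * C) (𝓝 0) (𝓝 0) :=
    (continuous_mul_const C).tendsto' 0 0 (zero_mul C)
  have hpos : ∀ᶠ t in 𝓝[>] (0 : ℝ), 0 < t := self_mem_nhdsWithin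
  have hsmall : ∀ᶠ t in 𝓝 (0 : ℝ), t < a ∧ t * C < b :=
    (eventually_lt_nhds ha).and (hC.eventually (eventually_lt_nhds hb))
  exact (hpos.and (hsmall.filter_mono nhdsWithin_le_nhds)).exists

section Rokhlin

variable {A G : Type*} [CStarAlgebra A] [Group G]

structure IsRokhlinTower (α : G →* (A ≃ₐ[ℂ] A)) (F : Finset A) (ε : ℝ) (f : G → A) : Prop where
  isProjection : ∀ g, IsProjection (f g)
  mul_eq_zero : ∀ g h, g ≠ h → f g * f h = 0
  norm_commutator_lt : ∀ g, ∀ a ∈ F, ‖f g * a - a * f g‖ < ε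
  norm_map_sub_lt : ∀ g h, ‖α g (f h) - f (g * h)‖ < ε

namespace IsRokhlinTower

variable [Fintype G] {α : G →* (A ≃ₐ[ℂ] A)} {F : Finset A} {ε : ℝ} {f : G → A}

lemma isStarProjection_sum (hf : IsRokhlinTower α F ε f) : IsStarProjection (∑ g, f g) :=
  .sum_of_mul_eq_zero (fun g => isProjection_iff_isStarProjection.mp (hf.isProjection g))
    hf.mul_eq_zero

lemma norm_sum_commutator_le (hf : IsRokhlinTower α F ε f) {a : A} (ha : a ∈ F) :
    ‖(∑ g, f g) * a - a * ∑ g, f g‖ ≤ Fintype.card G * ε := by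
  rw [Finset.sum_mul, Finset.mul_sum, ← Finset.sum_sub_distrib]
  calc _ ≤ ∑ g, ‖f g * a - a * f g‖ := norm_sum_le _ _
    _ ≤ ∑ _g : G, ε := Finset.sum_le_sum fun g _ => (hf.norm_commutator_lt g a ha).le
    _ = Fintype.card G * ε := by simp

end IsRokhlinTower

variable [PartialOrder A] [StarOrderedRing A] [Fintype G]

/-- The right-hand side of `tracialRokhlin_iff_ultrapower`, with limits along any filter `l`. -/
def HasTracialRokhlinAlong (α : G →* (A ≃ₐ[ℂ] A)) (l : Filter ℕ) : Prop :=
  ∀ (F : Finset A) (ε : ℝ), 0 < ε → ∀ x : A, 0 ≤ x → x ≠ 0 →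
    ∃ f : G → ℕ → A,
      (∀ g k, IsProjection (f g k)) ∧
      (∀ g h, g ≠ h → ∀ k, f g k * f h k = 0) ∧
      (∀ g, ∀ a ∈ F, ∃ L : ℝ,
        Filter.Tendsto (fun k => ‖f g k * a - a * f g k‖) l (nhds L) ∧ L < ε) ∧
      (∀ g h : G, ∃ L : ℝ,
        Filter.Tendsto (fun k => ‖α g (f h k) - f (g * h) k‖) l (nhds L) ∧ L < ε) ∧
      (∀ δ : ℝ, 0 < δ → ∃ v : ℕ → A, (∃ C : ℝ, ∀ k, ‖v k‖ ≤ C) ∧ ∃ L : ℝ,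
        Filter.Tendsto
          (fun k => ‖cutDown ((1 : A) - ∑ g, f g k) ε - v k * x * star (v k)‖) l (nhds L) ∧
          L < δ) ∧
      (∃ L : ℝ, Filter.Tendsto (fun k => ‖∑ g, f g k‖) l (nhds L) ∧ 1 - ε < L)

variable {α : G →* (A ≃ₐ[ℂ] A)}

theorem HasTracialRokhlin.hasTracialRokhlinAlong (h : HasTracialRokhlin α) (l : Filter ℕ) :
    HasTracialRokhlinAlong α l := by
  intro F ε hε x hx hx0
  have hxpos : 0 < ‖x‖ := norm_pos_iff.mpr hx0
  have hx1 : ‖‖x‖⁻¹ • x‖ = 1 := by rw [norm_smul, norm_inv, norm_norm, inv_mul_cancel₀ hxpos.ne']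
  obtain ⟨f, hproj, horth, hcomm, hequi, hcuntz, hnorm⟩ :=
    h F ε hε (‖x‖⁻¹ • x) (smul_nonneg (inv_nonneg.mpr hxpos.le) hx) hx1
  have hsum : IsStarProjection (∑ g, f g) :=
    (⟨hproj, horth, hcomm, hequi⟩ : IsRokhlinTower α F ε f).isStarProjection_sum
  refine ⟨fun g _ => f g, fun g _ => hproj g, fun g h hgh _ => horth g h hgh,
    fun g a ha => ⟨_, tendsto_const_nhds, hcomm g a ha⟩,
    fun g h => ⟨_, tendsto_const_nhds, hequi g h⟩, fun δ hδ => ?_, ⟨_, tendsto_const_nhds, ?_⟩⟩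
  · obtain ⟨v, hv⟩ := ((hcuntz.of_smul_right (inv_nonneg.mpr hxpos.le)).smul_left
      (le_max_right (1 - ε) 0)).exists_norm_sub_lt hδ
    refine ⟨fun _ => v, ⟨‖v‖, fun _ => le_rfl⟩, _, tendsto_const_nhds, ?_⟩
    rwa [hsum.one_sub.cutDown_eq hε.le]
  · calc 1 - ε < ‖(∑ g, f g) * (‖x‖⁻¹ • x) * ∑ g, f g‖ := hnorm
      _ ≤ ‖∑ g, f g‖ * ‖‖x‖⁻¹ • x‖ * ‖∑ g, f g‖ := norm_mul₃_le
      _ ≤ ‖∑ g, f g‖ := by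
        rw [hx1, mul_one]
        exact mul_le_of_le_one_right (norm_nonneg _) hsum.norm_le

theorem HasTracialRokhlinAlong.exists_isRokhlinTower {l : Filter ℕ} [l.NeBot]
    (h : HasTracialRokhlinAlong α l) (F : Finset A) {ε : ℝ} (hε : 0 < ε) (hε1 : ε < 1) {x : A}
    (hx : 0 ≤ x) (hx0 : x ≠ 0) :
    ∃ f : G → A, IsRokhlinTower α F ε f ∧ (∃ w, 1 - ∑ g, f g = w * x * star w) ∧
      1 - ε < ‖∑ g, f g‖ := by
  obtain ⟨f, hproj, horth, hcomm, hequi, hcut, hnorm⟩ := h F ε hε x hx hx0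
  obtain ⟨v, -, hv⟩ := hcut (1 - ε) (by linarith)
  have hev : ∀ᶠ k in l, (∀ g, ∀ a ∈ F, ‖f g k * a - a * f g k‖ < ε) ∧
      (∀ g h, ‖α g (f h k) - f (g * h) k‖ < ε) ∧
      ‖cutDown (1 - ∑ g, f g k) ε - v k * x * star (v k)‖ < 1 - ε ∧ 1 - ε < ‖∑ g, f g k‖ := by
    refine .and ?_ (.and ?_ (.and ?_ ?_))
    · refine eventually_all.2 fun g => (eventually_all_finset _).2 fun a ha => ?_
      obtain ⟨L, hL, hLε⟩ := hcomm g a ha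
      exact hL.eventually_lt_const hLε
    · refine eventually_all.2 fun g => eventually_all.2 fun h => ?_
      obtain ⟨L, hL, hLε⟩ := hequi g h
      exact hL.eventually_lt_const hLε
    · obtain ⟨L, hL, hLε⟩ := hv
      exact hL.eventually_lt_const hLε
    · obtain ⟨L, hL, hLε⟩ := hnorm
      exact hL.eventually_const_lt hLε
  obtain ⟨k, hk₁, hk₂, hk₃, hk₄⟩ := hev.exists
  have hf : IsRokhlinTower α F ε (fun g => f g k) :=
    ⟨fun g => hproj g k, fun g h hgh => horth g h hgh k, hk₁, hk₂⟩
  refine ⟨_, hf, ?_, hk₄⟩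
  rw [hf.isStarProjection_sum.one_sub.cutDown_eq hε.le, max_eq_left (by linarith)] at hk₃
  exact hf.isStarProjection_sum.one_sub.exists_eq_conj_of_norm_smul_sub_lt hx hk₃

theorem HasTracialRokhlinAlong.hasTracialRokhlin {l : Filter ℕ} [l.NeBot]
    (hA : ∀ I : TwoSidedIdeal A, IsClosed (I : Set A) → I = ⊥ ∨ I = ⊤)
    (h : HasTracialRokhlinAlong α l) : HasTracialRokhlin α := by
  classical
  intro F ε hε x hx hx1
  have hx0 : x ≠ 0 := norm_ne_zero_iff.mp (by rw [hx1]; exact one_ne_zero)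
  set η := min ε (1 / 2)
  have hη : 0 < η := lt_min hε one_half_pos
  set e := cutDown x (1 - η / 2)
  have he : IsSelfAdjoint e := (cutDown_nonneg x _).isSelfAdjoint
  have hee : e * e ≠ 0 := by
    nth_rw 1 [← he.star_eq]
    rw [Ne, CStarRing.star_mul_self_eq_zero_iff]
    exact cutDown_ne_zero hx (by linarith [min_le_right ε (1 / 2)]) (by linarith)
  obtain ⟨m, hm⟩ := exists_multiset_norm_one_sub_lt hA hee (by norm_num : (0 : ℝ) < 1 / 4)
  set C := (m.map fun q => ‖q.1‖ + ‖q.2‖).sum + 4 / η * (m.map fun q => ‖q.1‖ * ‖q.2‖).sum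
  obtain ⟨ε₁, hε₁, hε₁lt, hκ⟩ := exists_pos_lt_and_mul_lt (lt_min hε (by norm_num : (0 : ℝ) < 1 / 4))
    one_half_pos (Fintype.card G * C)
  have hε₁ε : ε₁ < ε := hε₁lt.trans_le (min_le_left _ _)
  have hε₁4 : ε₁ < 1 / 4 := hε₁lt.trans_le (min_le_right _ _)
  set Fe := insert e (F ∪ (m.map Prod.fst).toFinset ∪ (m.map Prod.snd).toFinset)
  obtain ⟨f, hf, ⟨w, hw⟩, hnorm⟩ := h.exists_isRokhlinTower Fe hε₁ (by linarith) hx hx0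
  refine ⟨f, hf.isProjection, hf.mul_eq_zero,
    fun g a ha => (hf.norm_commutator_lt g a (by simp [Fe, ha])).trans hε₁ε,
    fun g h => (hf.norm_map_sub_lt g h).trans hε₁ε, ⟨fun _ => w, by simp [hw]⟩, ?_⟩
  have hcoeff : ∀ q ∈ m, q.1 ∈ Fe ∧ q.2 ∈ Fe := fun q hq => by
    have h₁ := Multiset.mem_toFinset.mpr (Multiset.mem_map_of_mem Prod.fst hq)
    have h₂ := Multiset.mem_toFinset.mpr (Multiset.mem_map_of_mem Prod.snd hq)
    simp only [Fe, Finset.mem_insert, Finset.mem_union]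
    tauto
  have hcomm {a : A} (ha : a ∈ Fe) := hf.norm_sum_commutator_le ha
  have hcompress := hf.isStarProjection_sum.one_sub_lt_norm_compress hx1.le he
    (hx1 ▸ norm_cutDown_le x (by linarith [min_le_right ε (1 / 2)])) hη
    (smul_mul_self_cutDown_le hx.isSelfAdjoint _) hm.le (hcomm (by simp [Fe]))
    (fun q hq => ⟨hcomm (hcoeff q hq).1, hcomm (hcoeff q hq).2⟩) (by linarith) (by linarith)
  linarith [min_le_left ε (1 / 2)]

end Rokhlin

theorem tracialRokhlin_iff_ultrapower_general
    {A G : Type*} [CStarAlgebra A] [PartialOrder A] [StarOrderedRing A]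
    (hA : ∀ I : TwoSidedIdeal A, IsClosed (I : Set A) → I = ⊥ ∨ I = ⊤)
    [Group G] [Fintype G] (α : G →* (A ≃ₐ[ℂ] A))
    (ω : Ultrafilter ℕ) :
    HasTracialRokhlin α ↔
      ∀ (F : Finset A) (ε : ℝ), 0 < ε → ∀ x : A, 0 ≤ x → x ≠ 0 →
        ∃ f : G → ℕ → A,
          (∀ g k, IsProjection (f g k)) ∧
          (∀ g h, g ≠ h → ∀ k, f g k * f h k = 0) ∧
          (∀ g, ∀ a ∈ F, ∃ L : ℝ,
            Filter.Tendsto (fun k => ‖f g k * a - a * f g k‖) (ω : Filter ℕ) (nhds L) ∧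
            L < ε) ∧
          (∀ g h : G, ∃ L : ℝ,
            Filter.Tendsto (fun k => ‖α g (f h k) - f (g * h) k‖) (ω : Filter ℕ) (nhds L) ∧
            L < ε) ∧
          (∀ δ : ℝ, 0 < δ → ∃ v : ℕ → A, (∃ C : ℝ, ∀ k, ‖v k‖ ≤ C) ∧ ∃ L : ℝ,
            Filter.Tendsto
              (fun k => ‖cutDown ((1 : A) - ∑ g, f g k) ε - v k * x * star (v k)‖)
              (ω : Filter ℕ) (nhds L) ∧ L < δ) ∧
          (∃ L : ℝ,
            Filter.Tendsto (fun k => ‖∑ g, f g k‖) (ω : Filter ℕ) (nhds L) ∧ 1 - ε < L) :=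
  ⟨fun h => h.hasTracialRokhlinAlong ω, HasTracialRokhlinAlong.hasTracialRokhlin hA⟩

theorem tracialRokhlin_iff_ultrapower
    {A G : Type*} [CStarAlgebra A] [PartialOrder A] [StarOrderedRing A]
    (hA : ∀ I : TwoSidedIdeal A, IsClosed (I : Set A) → I = ⊥ ∨ I = ⊤)
    [Group G] [Fintype G] (α : G →* (A ≃ₐ[ℂ] A))
    (hα : ∀ (g : G) (a : A), α g (star a) = star (α g a))
    (ω : Ultrafilter ℕ) (hω : Filter.cofinite ≤ (ω : Filter ℕ)) :
    HasTracialRokhlin α ↔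
      ∀ (F : Finset A) (ε : ℝ), 0 < ε → ∀ x : A, 0 ≤ x → x ≠ 0 →
        ∃ f : G → ℕ → A,
          (∀ g k, IsProjection (f g k)) ∧
          (∀ g h, g ≠ h → ∀ k, f g k * f h k = 0) ∧
          (∀ g, ∀ a ∈ F, ∃ L : ℝ,
            Filter.Tendsto (fun k => ‖f g k * a - a * f g k‖) (ω : Filter ℕ) (nhds L) ∧
            L < ε) ∧
          (∀ g h : G, ∃ L : ℝ,
            Filter.Tendsto (fun k => ‖α g (f h k) - f (g * h) k‖) (ω : Filter ℕ) (nhds L) ∧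
            L < ε) ∧
          (∀ δ : ℝ, 0 < δ → ∃ v : ℕ → A, (∃ C : ℝ, ∀ k, ‖v k‖ ≤ C) ∧ ∃ L : ℝ,
            Filter.Tendsto
              (fun k => ‖cutDown ((1 : A) - ∑ g, f g k) ε - v k * x * star (v k)‖)
              (ω : Filter ℕ) (nhds L) ∧ L < δ) ∧
          (∃ L : ℝ,
            Filter.Tendsto (fun k => ‖∑ g, f g k‖) (ω : Filter ℕ) (nhds L) ∧ 1 - ε < L) :=
  tracialRokhlin_iff_ultrapower_general hA α ω
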